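/- arXiv:0909.4846 — 2 statements merged into one kernel-verified Lean document; each statement's English description precedes it below -/
import Mathlib

section
/- For every natural number r ≥ 1 and every natural number n, the integral over (0,∞) of x^n · (2/(r·x^{(r-1)/r})) · K₀(2·x^{1/(2r)}) dx equals ((rn)!)². -/
/-!
Substituting `s = c eᵗ` in the Sommerfeld integral gives `2 K₀(2c) = ∫₀^∞ e^{-s - c²/s} ds / s`.
With `u = c²`, Tonelli and two Gamma integrals then give
`∫₀^∞ uᵐ · 2 K₀(2√u) du = ∫₀^∞ (e^{-s}/s) ∫₀^∞ uᵐ e^{-u/s} du ds = m! ∫₀^∞ sᵐ e^{-s} ds = (m!)²`,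
and the change of variables `u = x^{1/r}` turns this, for `m = rn`, into the claimed integral.
-/

open MeasureTheory Real

/-- The modified Bessel function of the second kind of order zero,
via the Sommerfeld integral representation. -/
noncomputable def K0 (y : ℝ) : ℝ := ∫ t in Set.Ioi (0:ℝ), Real.exp (-y * Real.cosh t)

open Set

theorem integral_exp_neg_sub_sq_div_div_Ioi {c : ℝ} (hc : 0 < c) :
    ∫ s in Ioi (0:ℝ), exp (-s - c ^ 2 / s) / s = 2 * K0 (2 * c) := by
  have hderiv : ∀ t ∈ (univ : Set ℝ), HasDerivWithinAt (fun t ↦ c * exp t) (c * exp t) univ t :=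
    fun t _ ↦ ((hasDerivAt_exp t).const_mul c).hasDerivWithinAt
  have hinj : InjOn (fun t ↦ c * exp t) univ := fun a _ b _ h ↦
    exp_injective (mul_left_cancel₀ hc.ne' h)
  have himage : (fun t ↦ c * exp t) '' univ = Ioi 0 := by
    ext s
    simp only [image_univ, mem_range, mem_Ioi]
    refine ⟨fun ⟨t, hts⟩ ↦ hts ▸ by positivity, fun hs ↦ ⟨log (s / c), ?_⟩⟩
    rw [exp_log (by positivity), mul_div_cancel₀ _ hc.ne']
  rw [← himage, integral_image_eq_integral_abs_deriv_smul MeasurableSet.univ hderiv hinj,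
    Measure.restrict_univ, K0, ← integral_comp_abs]
  congr 1 with t
  have hpos : 0 < c * exp t := by positivity
  rw [abs_of_pos hpos, smul_eq_mul, mul_div_cancel₀ _ hpos.ne', cosh_abs, cosh_eq, exp_neg]
  congr 1
  field_simp
  ring

theorem integrableOn_pow_mul_exp_neg_mul_Ioi {b : ℝ} (hb : 0 < b) (m : ℕ) :
    IntegrableOn (fun u ↦ u ^ m * exp (-(b * u))) (Ioi 0) := by
  refine (integrableOn_rpow_mul_exp_neg_mul_rpow (s := m) (by linarith [m.cast_nonneg (α := ℝ)])
    one_pos hb).congr_fun (fun u _ ↦ ?_) measurableSet_Ioi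
  simp only [rpow_one, rpow_natCast, neg_mul]

theorem integral_pow_mul_exp_neg_mul_Ioi {b : ℝ} (hb : 0 < b) (m : ℕ) :
    ∫ u in Ioi 0, u ^ m * exp (-(b * u)) = m.factorial / b ^ (m + 1) := by
  have h := integral_rpow_mul_exp_neg_mul_Ioi (a := m + 1) (by positivity) hb
  rw [← Nat.cast_add_one, rpow_natCast, Nat.cast_add_one, Gamma_nat_eq_factorial] at h
  simp only [add_sub_cancel_right, rpow_natCast] at h
  rw [h, one_div_pow, one_div_mul_eq_div]

theorem pow_mul_exp_neg_sub_div_div_eq (m : ℕ) (u s : ℝ) :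
    u ^ m * (exp (-s - u / s) / s) = exp (-s) / s * (u ^ m * exp (-(s⁻¹ * u))) := by
  rw [sub_eq_add_neg, exp_add, div_eq_inv_mul u]
  ring

theorem integrableOn_pow_mul_exp_neg_sub_div_div {s : ℝ} (hs : 0 < s) (m : ℕ) :
    IntegrableOn (fun u ↦ u ^ m * (exp (-s - u / s) / s)) (Ioi 0) := by
  simp_rw [pow_mul_exp_neg_sub_div_div_eq]
  exact (integrableOn_pow_mul_exp_neg_mul_Ioi (inv_pos.2 hs) m).const_mul _

theorem integral_pow_mul_exp_neg_sub_div_div {s : ℝ} (hs : 0 < s) (m : ℕ) :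
    ∫ u in Ioi 0, u ^ m * (exp (-s - u / s) / s) = m.factorial * (s ^ m * exp (-s)) := by
  simp only [pow_mul_exp_neg_sub_div_div_eq, integral_const_mul,
    integral_pow_mul_exp_neg_mul_Ioi (inv_pos.2 hs), inv_pow, pow_succ]
  field_simp

theorem integrable_pow_mul_exp_neg_sub_div_div_prod (m : ℕ) :
    Integrable (fun p : ℝ × ℝ ↦ p.1 ^ m * (exp (-p.2 - p.1 / p.2) / p.2))
      ((volume.restrict (Ioi 0)).prod (volume.restrict (Ioi 0))) := by
  refine (integrable_prod_iff' (by fun_prop)).2 ⟨?_, ?_⟩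
  · filter_upwards [ae_restrict_mem measurableSet_Ioi] with s hs
    exact integrableOn_pow_mul_exp_neg_sub_div_div hs m
  · have h := (integrableOn_pow_mul_exp_neg_mul_Ioi one_pos m).const_mul (m.factorial : ℝ)
    simp only [one_mul] at h
    refine h.congr ?_
    filter_upwards [ae_restrict_mem measurableSet_Ioi] with s (hs : 0 < s)
    rw [← integral_pow_mul_exp_neg_sub_div_div hs m]
    refine (setIntegral_congr_fun measurableSet_Ioi fun u (hu : 0 < u) ↦ ?_).symm
    exact Real.norm_of_nonneg (by positivity)

theorem integral_pow_mul_two_mul_K0 (m : ℕ) :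
    ∫ u in Ioi 0, u ^ m * (2 * K0 (2 * √u)) = (m.factorial : ℝ) ^ 2 := by
  calc ∫ u in Ioi 0, u ^ m * (2 * K0 (2 * √u))
      = ∫ u in Ioi 0, ∫ s in Ioi 0, u ^ m * (exp (-s - u / s) / s) := by
        refine setIntegral_congr_fun measurableSet_Ioi fun u (hu : 0 < u) ↦ ?_
        have hK := integral_exp_neg_sub_sq_div_div_Ioi (sqrt_pos.2 hu)
        rw [sq_sqrt hu.le] at hK
        rw [integral_const_mul, hK]
    _ = ∫ s in Ioi 0, ∫ u in Ioi 0, u ^ m * (exp (-s - u / s) / s) :=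
        integral_integral_swap (integrable_pow_mul_exp_neg_sub_div_div_prod m)
    _ = ∫ s in Ioi 0, m.factorial * (s ^ m * exp (-s)) :=
        setIntegral_congr_fun measurableSet_Ioi fun s hs ↦ integral_pow_mul_exp_neg_sub_div_div hs m
    _ = (m.factorial : ℝ) ^ 2 := by
        have h := integral_pow_mul_exp_neg_mul_Ioi one_pos m
        simp only [one_mul, one_pow, div_one] at h
        rw [integral_const_mul, h, sq]

theorem stmt_3 (r : ℕ) (hr : 1 ≤ r) (n : ℕ) :
    ∫ x in Set.Ioi (0:ℝ),
      (x : ℝ) ^ n *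
        (2 / ((r : ℝ) * x ^ (((r : ℝ) - 1) / (r : ℝ))) * K0 (2 * x ^ (1 / (2 * (r : ℝ)))))
      = ((r * n).factorial : ℝ) ^ 2 := by
  have hr0 : (0 : ℝ) < r := by exact_mod_cast hr
  rw [← integral_pow_mul_two_mul_K0, ← integral_comp_rpow_Ioi_of_pos (inv_pos.2 hr0)
    (g := fun u ↦ u ^ (r * n) * (2 * K0 (2 * √u)))]
  refine setIntegral_congr_fun measurableSet_Ioi fun x (hx : 0 < x) ↦ ?_
  have h_pow : (x ^ (r : ℝ)⁻¹) ^ (r * n) = x ^ n := by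
    rw [← rpow_natCast, ← rpow_mul hx.le, Nat.cast_mul, inv_mul_cancel_left₀ hr0.ne', rpow_natCast]
  have h_sqrt : √(x ^ (r : ℝ)⁻¹) = x ^ (1 / (2 * (r : ℝ))) := by
    rw [sqrt_eq_rpow, ← rpow_mul hx.le]
    congr 1
    field_simp
  have h_jac : x ^ ((r : ℝ)⁻¹ - 1) = (x ^ (((r : ℝ) - 1) / r))⁻¹ := by
    rw [← rpow_neg hx.le]
    congr 1
    field_simp
    ring
  rw [smul_eq_mul, h_pow, h_sqrt, h_jac]
  field_simp
end

section
/- Let r ≥ 2 and k be integers with r > |k| ≥ 1. If ε₁, ε₂ are distinct reals in (-1,1), then the two functions W̃_{ε₁} and W̃_{ε₂} defined by W̃_ε(x) = (1/(2r·x^{(2r-1)/(2r)})) · e^{-x^{1/(2r)}} · [1 + ε·sin(kπ·(2r-1)/(2r) + x^{1/(2r)}·tan(kπ/(2r)))] are distinct positive functions on (0,∞) having identical moments ∫₀^∞ x^n W̃_ε(x) dx = (2rn)! for all n; hence the Stieltjes moment problem for (2rn)! is indeterminate. -/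
/-!
Substituting `x = t ^ (2r)` turns the `n`-th moment of `W̃_ε` into
`∫₀^∞ t^(2rn) e^(-t) (1 + ε sin (θ + t tan φ)) dt`, where `φ = kπ/(2r)` and `θ = (2r - 1) φ`.
With `z = 1 - i tan φ`, whose inverse is `cos φ · e^(iφ)`, the formula
`∫₀^∞ t^m e^(-zt) dt = m! / z^(m+1)` gives
`∫₀^∞ t^m e^(-t) sin (θ + t tan φ) dt = m! cos^(m+1) φ · sin (θ + (m+1) φ)`.
For `m = 2rn` the angle is `θ + (2rn + 1) φ = k (n + 1) π`, so the sine term contributes nothing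
and every `ε ∈ (-1, 1)` gives a positive density with moments `(2rn)!`. Since `tan φ ≠ 0`, the
sine factor does not vanish identically, so different `ε` give different densities.
-/

open MeasureTheory Real Set Filter Topology

section Laplace

open Complex

lemma norm_ofReal_pow_mul_cexp_neg_mul (z : ℂ) (m : ℕ) {t : ℝ} (ht : 0 ≤ t) :
    ‖(t : ℂ) ^ m * cexp (-(z * t))‖ = t ^ (m : ℝ) * rexp (-z.re * t) := by
  rw [norm_mul, norm_pow, Complex.norm_exp, norm_real, Real.norm_of_nonneg ht, rpow_natCast]
  simp

lemma integrableOn_ofReal_pow_mul_cexp_neg_mul_Ioi {z : ℂ} (hz : 0 < z.re) (m : ℕ) :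
    IntegrableOn (fun t : ℝ ↦ (t : ℂ) ^ m * cexp (-(z * t))) (Ioi 0) := by
  refine Integrable.mono' (integrableOn_rpow_mul_exp_neg_mul_rpow (s := m) (p := 1)
    (by linarith [m.cast_nonneg (α := ℝ)]) one_pos hz) (by fun_prop) ?_
  filter_upwards [ae_restrict_mem measurableSet_Ioi] with t ht
  rw [norm_ofReal_pow_mul_cexp_neg_mul z m (le_of_lt ht), rpow_one]

lemma tendsto_ofReal_pow_mul_cexp_neg_mul_atTop {z : ℂ} (hz : 0 < z.re) (m : ℕ) :
    Tendsto (fun t : ℝ ↦ (t : ℂ) ^ m * cexp (-(z * t))) atTop (𝓝 0) := by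
  refine squeeze_zero_norm' ?_ (tendsto_rpow_mul_exp_neg_mul_atTop_nhds_zero m _ hz)
  filter_upwards [eventually_ge_atTop 0] with t ht
  rw [norm_ofReal_pow_mul_cexp_neg_mul z m ht, neg_mul]

lemma hasDerivAt_ofReal_pow_mul_cexp_neg_mul (z : ℂ) (m : ℕ) (t : ℝ) :
    HasDerivAt (fun s : ℝ ↦ (s : ℂ) ^ (m + 1) * cexp (-(z * s)))
      ((m + 1) * ((t : ℂ) ^ m * cexp (-(z * t))) -
        z * ((t : ℂ) ^ (m + 1) * cexp (-(z * t)))) t := by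
  have hexp : HasDerivAt (fun s : ℂ ↦ cexp (-(z * s))) (cexp (-(z * t)) * -z) t :=
    (((hasDerivAt_id (t : ℂ)).const_mul z).neg).cexp.congr_deriv (by simp)
  refine (((hasDerivAt_pow (m + 1) (t : ℂ)).mul hexp).comp_ofReal).congr_deriv ?_
  push_cast
  ring

lemma integral_ofReal_pow_mul_cexp_neg_mul_Ioi {z : ℂ} (hz : 0 < z.re) (m : ℕ) :
    ∫ t in Ioi (0 : ℝ), (t : ℂ) ^ m * cexp (-(z * t)) = m.factorial / z ^ (m + 1) := by
  have hz0 : z ≠ 0 := by rintro rfl; simp at hz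
  induction m with
  | zero =>
    simpa [neg_mul, div_neg, neg_div] using integral_exp_mul_complex_Ioi (a := -z) (by simpa) 0
  | succ m ih =>
    have hint := integrableOn_ofReal_pow_mul_cexp_neg_mul_Ioi hz
    -- the derivative of `t^(m+1) e^(-zt)` integrates to `0`, so `(m + 1) I_m = z I_(m+1)`
    have hftc := integral_Ioi_of_hasDerivAt_of_tendsto'
      (fun t _ ↦ hasDerivAt_ofReal_pow_mul_cexp_neg_mul z m t)
      (((hint m).const_mul _).sub ((hint (m + 1)).const_mul z))
      (tendsto_ofReal_pow_mul_cexp_neg_mul_atTop hz (m + 1))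
    rw [integral_sub ((hint m).const_mul _) ((hint (m + 1)).const_mul z), integral_const_mul,
      integral_const_mul, ih] at hftc
    simp only [ofReal_zero, zero_pow m.succ_ne_zero, zero_mul, sub_zero] at hftc
    rw [eq_div_iff (pow_ne_zero _ hz0)]
    push_cast [Nat.factorial_succ]
    field_simp at hftc ⊢
    linear_combination -hftc

end Laplace

lemma pow_mul_exp_neg_eq_Gamma_integrand (m : ℕ) :
    (fun t : ℝ ↦ t ^ m * rexp (-t)) = fun t ↦ rexp (-t) * t ^ ((m + 1 : ℕ) - 1 : ℝ) := by
  ext t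
  rw [Nat.cast_succ, add_sub_cancel_right, rpow_natCast, mul_comm]

lemma integrableOn_pow_mul_exp_neg_Ioi (m : ℕ) :
    IntegrableOn (fun t : ℝ ↦ t ^ m * rexp (-t)) (Ioi 0) := by
  rw [pow_mul_exp_neg_eq_Gamma_integrand]
  exact GammaIntegral_convergent (by positivity)

lemma integral_pow_mul_exp_neg_Ioi (m : ℕ) :
    ∫ t in Ioi (0 : ℝ), t ^ m * rexp (-t) = m.factorial := by
  rw [pow_mul_exp_neg_eq_Gamma_integrand, ← Real.Gamma_eq_integral (by positivity), Nat.cast_succ,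
    Real.Gamma_nat_eq_factorial]

section Oscillatory

open Complex

variable {φ : ℝ}

lemma one_sub_tan_mul_I_mul_cos_mul_exp (hc : Real.cos φ ≠ 0) :
    (1 - Real.tan φ * I) * (Real.cos φ * cexp (φ * I)) = 1 := by
  have hc' : Complex.cos φ ≠ 0 := by exact_mod_cast hc
  rw [exp_mul_I, ofReal_tan, ofReal_cos, Complex.tan_eq_sin_div_cos]
  field_simp
  linear_combination (-Complex.sin φ ^ 2) * I_sq + Complex.sin_sq_add_cos_sq φ

lemma im_cexp_mul_I_mul_ofReal_pow_mul_cexp (θ τ : ℝ) (m : ℕ) (t : ℝ) :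
    (cexp (θ * I) * ((t : ℂ) ^ m * cexp (-((1 - τ * I) * t)))).im =
      t ^ m * rexp (-t) * Real.sin (θ + t * τ) := by
  have h : cexp (θ * I) * ((t : ℂ) ^ m * cexp (-((1 - τ * I) * t))) =
      (t ^ m * rexp (-t) : ℝ) * cexp ((θ + t * τ : ℝ) * I) := by
    push_cast
    rw [← mul_assoc, mul_comm _ ((t : ℂ) ^ m), mul_assoc, ← Complex.exp_add, mul_assoc,
      ← Complex.exp_add]
    ring_nf
  rw [h, im_ofReal_mul, exp_ofReal_mul_I_im]

lemma integrableOn_pow_mul_exp_neg_mul_sin (θ τ : ℝ) (m : ℕ) :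
    IntegrableOn (fun t ↦ t ^ m * rexp (-t) * Real.sin (θ + t * τ)) (Ioi 0) := by
  have hz : 0 < (1 - τ * I).re := by simp
  have h := ((integrableOn_ofReal_pow_mul_cexp_neg_mul_Ioi hz m).const_mul (cexp (θ * I))).im
  simp only [RCLike.im_to_complex, im_cexp_mul_I_mul_ofReal_pow_mul_cexp] at h
  exact h

lemma integral_pow_mul_exp_neg_mul_sin (hc : Real.cos φ ≠ 0) (θ : ℝ) (m : ℕ) :
    ∫ t in Ioi (0 : ℝ), t ^ m * rexp (-t) * Real.sin (θ + t * Real.tan φ) =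
      m.factorial * Real.cos φ ^ (m + 1) * Real.sin (θ + (m + 1) * φ) := by
  set z : ℂ := 1 - Real.tan φ * I
  have hz : 0 < z.re := by simp [z]
  have hz_inv :
      (z ^ (m + 1))⁻¹ = (Real.cos φ ^ (m + 1) : ℝ) * cexp (((m + 1) * φ : ℝ) * I) := by
    rw [← inv_pow, inv_eq_of_mul_eq_one_right (one_sub_tan_mul_I_mul_cos_mul_exp hc), mul_pow,
      ← Complex.exp_nat_mul]
    push_cast
    ring_nf
  have hint := (integrableOn_ofReal_pow_mul_cexp_neg_mul_Ioi hz m).const_mul (cexp (θ * I))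
  calc ∫ t in Ioi (0 : ℝ), t ^ m * rexp (-t) * Real.sin (θ + t * Real.tan φ)
      = (∫ t in Ioi (0 : ℝ), cexp (θ * I) * ((t : ℂ) ^ m * cexp (-(z * t)))).im := by
        rw [← RCLike.im_to_complex, ← integral_im hint]
        simp_rw [z, RCLike.im_to_complex, im_cexp_mul_I_mul_ofReal_pow_mul_cexp]
    _ = (((m.factorial * Real.cos φ ^ (m + 1) : ℝ) : ℂ) *
          cexp ((θ + (m + 1) * φ : ℝ) * I)).im := by
        rw [integral_const_mul, integral_ofReal_pow_mul_cexp_neg_mul_Ioi hz, div_eq_mul_inv, hz_inv,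
          ofReal_add, add_mul (θ : ℂ), Complex.exp_add]
        push_cast
        ring_nf
    _ = m.factorial * Real.cos φ ^ (m + 1) * Real.sin (θ + (m + 1) * φ) := by
        rw [im_ofReal_mul, exp_ofReal_mul_I_im]

lemma integral_pow_mul_exp_neg_mul_one_add_mul_sin (hc : Real.cos φ ≠ 0) (θ ε : ℝ)
    (m : ℕ) :
    ∫ t in Ioi (0 : ℝ), t ^ m * (rexp (-t) * (1 + ε * Real.sin (θ + t * Real.tan φ))) =
      m.factorial * (1 + ε * (Real.cos φ ^ (m + 1) * Real.sin (θ + (m + 1) * φ))) := by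
  have hsin := integrableOn_pow_mul_exp_neg_mul_sin θ (Real.tan φ) m
  calc ∫ t in Ioi (0 : ℝ), t ^ m * (rexp (-t) * (1 + ε * Real.sin (θ + t * Real.tan φ)))
      = ∫ t in Ioi (0 : ℝ), t ^ m * rexp (-t) +
          ε * (t ^ m * rexp (-t) * Real.sin (θ + t * Real.tan φ)) := by
        congr 1 with t
        ring
    _ = m.factorial +
          ε * (m.factorial * Real.cos φ ^ (m + 1) * Real.sin (θ + (m + 1) * φ)) := by
        rw [integral_add (integrableOn_pow_mul_exp_neg_Ioi m) (hsin.const_mul ε),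
          integral_const_mul, integral_pow_mul_exp_neg_Ioi, integral_pow_mul_exp_neg_mul_sin hc]
    _ = _ := by ring

end Oscillatory

lemma one_add_mul_sin_pos {ε : ℝ} (hε : ε ∈ Ioo (-1 : ℝ) 1) (s : ℝ) :
    0 < 1 + ε * sin s := by
  have h : |ε * sin s| < 1 := by
    rw [abs_mul]
    exact (mul_le_of_le_one_right (abs_nonneg ε) (abs_sin_le_one s)).trans_lt (abs_lt.mpr hε)
  linarith [neg_abs_le (ε * sin s)]

lemma exists_pos_sin_add_mul_ne_zero (θ : ℝ) {τ : ℝ} (hτ : τ ≠ 0) :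
    ∃ t, 0 < t ∧ sin (θ + t * τ) ≠ 0 := by
  by_contra! h
  set s := π / (2 * |τ|)
  have hs : 0 < s := by positivity
  have hsτ : |s * τ| = π / 2 := by
    have := abs_pos.mpr hτ
    rw [abs_mul, abs_of_pos hs]
    simp only [s]
    field_simp
  have hcos : cos (θ + 1 * τ) ≠ 0 := by
    intro hc
    have := sin_sq_add_cos_sq (θ + 1 * τ)
    rw [h 1 one_pos, hc] at this
    norm_num at this
  have hsin : sin (s * τ) = 0 := by
    have := h (1 + s) (by positivity)
    rw [add_mul, ← add_assoc, sin_add, h 1 one_pos, zero_mul, zero_add] at this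
    exact (mul_eq_zero.mp this).resolve_left hcos
  have hπ := pi_pos
  rw [sin_eq_zero_iff_of_lt_of_lt (by linarith [neg_abs_le (s * τ)])
    (by linarith [le_abs_self (s * τ)])] at hsin
  rw [hsin, abs_zero] at hsτ
  linarith

lemma tan_ne_zero_of_abs_lt_pi_div_two {φ : ℝ} (h0 : φ ≠ 0) (h : |φ| < π / 2) :
    tan φ ≠ 0 := by
  obtain ⟨hl, hu⟩ := abs_lt.mp h
  rw [tan_eq_sin_div_cos]
  refine div_ne_zero ?_ (cos_pos_of_mem_Ioo ⟨hl, hu⟩).ne'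
  rw [ne_eq, sin_eq_zero_iff_of_lt_of_lt (by linarith [pi_pos]) (by linarith [pi_pos])]
  exact h0

section Angle

variable {k r : ℝ}

lemma abs_mul_pi_div_two_mul_lt (hkr : |k| < r) : |k * π / (2 * r)| < π / 2 := by
  have hr : 0 < r := (abs_nonneg k).trans_lt hkr
  rw [abs_div, abs_mul, abs_of_pos pi_pos, abs_of_pos (by linarith : (0 : ℝ) < 2 * r),
    div_lt_div_iff₀ (by linarith) two_pos]
  nlinarith [pi_pos]

lemma cos_mul_pi_div_two_mul_pos (hkr : |k| < r) : 0 < cos (k * π / (2 * r)) :=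
  cos_pos_of_mem_Ioo (abs_lt.mp (abs_mul_pi_div_two_mul_lt hkr))

lemma tan_mul_pi_div_two_mul_ne_zero (hk : k ≠ 0) (hkr : |k| < r) :
    tan (k * π / (2 * r)) ≠ 0 :=
  tan_ne_zero_of_abs_lt_pi_div_two
    (div_ne_zero (mul_ne_zero hk pi_ne_zero)
      (mul_ne_zero two_ne_zero ((abs_nonneg k).trans_lt hkr).ne'))
    (abs_mul_pi_div_two_mul_lt hkr)

end Angle

lemma sin_mul_pi_mul_sub_one_div_add_mul_eq_zero (k : ℤ) {r : ℕ} (hr : r ≠ 0) (n : ℕ) :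
    sin (k * π * (2 * r - 1) / (2 * r) + ((2 * r * n : ℕ) + 1) * (k * π / (2 * r))) = 0 := by
  rw [← sin_int_mul_pi (k * (n + 1))]
  congr 1
  field_simp
  push_cast
  ring

lemma integral_pow_mul_eq_of_eq_comp_rpow {N : ℕ} (hN : 0 < N) {w g : ℝ → ℝ}
    (hw : ∀ x > 0, w x = 1 / (N * x ^ ((N - 1) / N : ℝ)) * g (x ^ (1 / N : ℝ))) (n : ℕ) :
    ∫ x in Ioi (0 : ℝ), x ^ n * w x = ∫ t in Ioi (0 : ℝ), t ^ (N * n) * g t := by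
  have hN' : (0 : ℝ) < N := by exact_mod_cast hN
  rw [← integral_comp_rpow_Ioi_of_pos (g := fun t ↦ t ^ (N * n) * g t) (one_div_pos.mpr hN')]
  refine setIntegral_congr_fun measurableSet_Ioi fun x (hx : 0 < x) ↦ ?_
  have hpow : (x ^ (1 / N : ℝ)) ^ (N * n) = x ^ n := by
    rw [← rpow_natCast, ← rpow_mul hx.le, ← rpow_natCast x n]
    push_cast
    field_simp
  have hexp : x ^ (1 / N - 1 : ℝ) = (x ^ ((N - 1) / N : ℝ))⁻¹ := by
    rw [← rpow_neg hx.le]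
    field_simp
    ring_nf
  rw [hw x hx, smul_eq_mul, hpow, hexp]
  have : x ^ ((N - 1) / N : ℝ) ≠ 0 := (rpow_pos_of_pos hx _).ne'
  field_simp

theorem stmt_13_general (r : ℕ) (k : ℤ) (hk : 1 ≤ |k|) (hrk : |k| < (r : ℤ))
    (ε₁ ε₂ : ℝ) (hε₁ : ε₁ ∈ Set.Ioo (-1 : ℝ) 1) (hε₂ : ε₂ ∈ Set.Ioo (-1 : ℝ) 1)
    (hne : ε₁ ≠ ε₂)
    (W : ℝ → ℝ → ℝ)
    (hW : W = fun ε x =>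
      1 / (2 * (r : ℝ) * x ^ ((2 * (r : ℝ) - 1) / (2 * (r : ℝ)))) *
        Real.exp (-(x ^ (1 / (2 * (r : ℝ))))) *
        (1 + ε * Real.sin ((k : ℝ) * Real.pi * (2 * (r : ℝ) - 1) / (2 * (r : ℝ)) +
          x ^ (1 / (2 * (r : ℝ))) * Real.tan ((k : ℝ) * Real.pi / (2 * (r : ℝ)))))) :
    (∀ x : ℝ, 0 < x → 0 < W ε₁ x) ∧
    (∀ x : ℝ, 0 < x → 0 < W ε₂ x) ∧
    (∃ x : ℝ, 0 < x ∧ W ε₁ x ≠ W ε₂ x) ∧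
    (∀ n : ℕ, ∫ x in Set.Ioi (0:ℝ), (x : ℝ) ^ n * W ε₁ x = ((2 * r * n).factorial : ℝ)) ∧
    (∀ n : ℕ, ∫ x in Set.Ioi (0:ℝ), (x : ℝ) ^ n * W ε₂ x = ((2 * r * n).factorial : ℝ)) := by
  set φ : ℝ := k * π / (2 * r)
  set θ : ℝ := k * π * (2 * r - 1) / (2 * r)
  have hr : r ≠ 0 := by have := hk.trans_lt hrk; omega
  have hkr : |(k : ℝ)| < r := by exact_mod_cast hrk
  have hcos : cos φ ≠ 0 := (cos_mul_pi_div_two_mul_pos hkr).ne'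
  have htan : tan φ ≠ 0 :=
    tan_mul_pi_div_two_mul_ne_zero (by exact_mod_cast abs_pos.mp (one_pos.trans_le hk)) hkr
  have hpos (ε : ℝ) (hε : ε ∈ Ioo (-1 : ℝ) 1) (x : ℝ) (hx : 0 < x) : 0 < W ε x := by
    rw [hW]
    exact mul_pos (by positivity) (one_add_mul_sin_pos hε _)
  have hmoment (ε : ℝ) (n : ℕ) : ∫ x in Ioi 0, x ^ n * W ε x = (2 * r * n).factorial := by
    rw [integral_pow_mul_eq_of_eq_comp_rpow (N := 2 * r) (by omega)
        (g := fun t ↦ rexp (-t) * (1 + ε * sin (θ + t * tan φ)))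
        (fun x _ ↦ by rw [hW]; push_cast; ring) n,
      integral_pow_mul_exp_neg_mul_one_add_mul_sin hcos,
      sin_mul_pi_mul_sub_one_div_add_mul_eq_zero k hr n, mul_zero, mul_zero, add_zero, mul_one]
  obtain ⟨t, ht, hsin⟩ := exists_pos_sin_add_mul_ne_zero θ htan
  refine ⟨hpos ε₁ hε₁, hpos ε₂ hε₂, ⟨t ^ (2 * r : ℝ), by positivity, fun heq ↦ hne ?_⟩,
    hmoment ε₁, hmoment ε₂⟩
  have hx : (t ^ (2 * r : ℝ)) ^ (1 / (2 * r : ℝ)) = t := by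
    rw [← rpow_mul ht.le, mul_one_div_cancel (by positivity), rpow_one]
  simp only [hW, hx] at heq
  exact mul_right_cancel₀ hsin (add_left_cancel (mul_left_cancel₀ (by positivity) heq))

theorem stmt_13 (r : ℕ) (hr : 2 ≤ r) (k : ℤ) (hk : 1 ≤ |k|) (hrk : |k| < (r : ℤ))
    (ε₁ ε₂ : ℝ) (hε₁ : ε₁ ∈ Set.Ioo (-1 : ℝ) 1) (hε₂ : ε₂ ∈ Set.Ioo (-1 : ℝ) 1)
    (hne : ε₁ ≠ ε₂)
    (W : ℝ → ℝ → ℝ)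
    (hW : W = fun ε x =>
      1 / (2 * (r : ℝ) * x ^ ((2 * (r : ℝ) - 1) / (2 * (r : ℝ)))) *
        Real.exp (-(x ^ (1 / (2 * (r : ℝ))))) *
        (1 + ε * Real.sin ((k : ℝ) * Real.pi * (2 * (r : ℝ) - 1) / (2 * (r : ℝ)) +
          x ^ (1 / (2 * (r : ℝ))) * Real.tan ((k : ℝ) * Real.pi / (2 * (r : ℝ)))))) :
    (∀ x : ℝ, 0 < x → 0 < W ε₁ x) ∧
    (∀ x : ℝ, 0 < x → 0 < W ε₂ x) ∧
    (∃ x : ℝ, 0 < x ∧ W ε₁ x ≠ W ε₂ x) ∧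
    (∀ n : ℕ, ∫ x in Set.Ioi (0:ℝ), (x : ℝ) ^ n * W ε₁ x = ((2 * r * n).factorial : ℝ)) ∧
    (∀ n : ℕ, ∫ x in Set.Ioi (0:ℝ), (x : ℝ) ^ n * W ε₂ x = ((2 * r * n).factorial : ℝ)) :=
  stmt_13_general r k hk hrk ε₁ ε₂ hε₁ hε₂ hne W hW
end
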